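/- Let m, n ≥ 0, let λ ∈ Λ_{n+1} with λ ⊂ m^{n+1}, let μ ∈ Λ_n with μ ⊂ m^n, and assume μ ⪯ λ (with μ regarded as an element of Λ_{n+1}). Then the set of ν ∈ Λ_m with ν ⊂ (n^m − μ′), ν ⊂ ((n+1)^m − λ′) such that (n^m − μ′)/ν and ((n+1)^m − λ′)/ν are vertical strips is nonempty, and the minimum over all such ν of |(n^m − μ′)/ν| + |((n+1)^m − λ′)/ν| equals m − d, where d = #{1 ≤ j ≤ m : λ′_j = μ′_j + 1}. -/

import Mathlib

open Finset

/-- `l` is a partition with at most `N` parts: `l 1 ≥ l 2 ≥ ⋯ ≥ l N (≥ 0)`. -/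
def IsPartition {N : ℕ} (l : Fin N → ℕ) : Prop :=
  ∀ i j : Fin N, i ≤ j → l j ≤ l i

/-- Containment of diagrams: `μ ⊂ l`. -/
def SubDiag {N : ℕ} (μ l : Fin N → ℕ) : Prop := ∀ j, μ j ≤ l j

/-- The weight `|l| = l 1 + ⋯ + l N`. -/
def wt {N : ℕ} (l : Fin N → ℕ) : ℕ := ∑ j, l j

/-- The skew diagram `l/μ` is a vertical strip: `μ j ≤ l j ≤ μ j + 1` for all `j`. -/
def VStrip {N : ℕ} (l μ : Fin N → ℕ) : Prop :=
  ∀ j, μ j ≤ l j ∧ l j ≤ μ j + 1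

/-- The skew diagram `l/μ` is a horizontal strip:
`l 1 ≥ μ 1 ≥ l 2 ≥ μ 2 ≥ ⋯ ≥ l N ≥ μ N` (interlacing). -/
def HStrip {N : ℕ} (l μ : Fin N → ℕ) : Prop :=
  (∀ j, μ j ≤ l j) ∧ ∀ (j : ℕ) (h : j + 1 < N), l ⟨j + 1, h⟩ ≤ μ ⟨j, by omega⟩

/-- `|l/μ| = |l| - |μ|` (for `μ ⊂ l`). -/
def skewWt {N : ℕ} (l μ : Fin N → ℕ) : ℕ := ∑ j, (l j - μ j)

/-- The proximity relation `μ ∼_r l`: there is a partition `ν ⊂ l, ν ⊂ μ` such that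
`l/ν` and `μ/ν` are vertical strips with `|l/ν| + |μ/ν| ≤ r`. -/
def simRel {N : ℕ} (r : ℕ) (μ l : Fin N → ℕ) : Prop :=
  ∃ ν : Fin N → ℕ, IsPartition ν ∧ SubDiag ν l ∧ SubDiag ν μ ∧
    VStrip l ν ∧ VStrip μ ν ∧ skewWt l ν + skewWt μ ν ≤ r

/-- `μ ⪯ l`: there is a partition `ν` with `μ ⊂ ν ⊂ l` such that `l/ν` and `ν/μ`
are horizontal strips. -/
def preceq {N : ℕ} (μ l : Fin N → ℕ) : Prop :=
  ∃ ν : Fin N → ℕ, IsPartition ν ∧ SubDiag μ ν ∧ SubDiag ν l ∧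
    HStrip l ν ∧ HStrip ν μ

/-- The conjugate partition `l′ ∈ Λ_m` (for `l ∈ Λ_N` with `l 1 ≤ m`):
`l′ i = #{j : l j ≥ i}` (here `i : Fin m` is 0-based, so `i+1`-th row). -/
def conjP {N : ℕ} (m : ℕ) (l : Fin N → ℕ) : Fin m → ℕ :=
  fun i => (Finset.univ.filter (fun j : Fin N => (i : ℕ) + 1 ≤ l j)).card

/-- The rectangular partition `m^N ∈ Λ_N`. -/
def rectP (m N : ℕ) : Fin N → ℕ := fun _ => m

/-- The complement `m^N − l` of `l ⊂ m^N` in `Λ_N`: `(m^N − l) j = m − l (N+1−j)`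
(1-based), i.e. `m - l j.rev` (0-based). -/
def complP {N : ℕ} (m : ℕ) (l : Fin N → ℕ) : Fin N → ℕ :=
  fun j => m - l j.rev

/-- The natural embedding `Λ_N ↪ Λ_{N+1}` by appending a zero part. -/
def extendP {N : ℕ} (l : Fin N → ℕ) : Fin (N + 1) → ℕ := Fin.snoc l 0


/-! The conjugates `a = μ′` and `b = λ′` satisfy `a ≤ b ≤ a + 2`, since a horizontal strip
conjugates to a vertical strip. Hence the two complements `A = n^m − μ′` and
`B = (n+1)^m − λ′` differ by at most one in each part, `A ⊓ B` is an admissible `ν`, and every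
admissible `ν` costs at least `∑ |A j - B j|`, which is `1` exactly at the parts where
`b j ≠ a j + 1`. -/

section Conjugate

variable {N : ℕ} (m : ℕ)

lemma conjP_le_conjP {l l' : Fin N → ℕ} (h : SubDiag l l') (i : Fin m) :
    conjP m l i ≤ conjP m l' i :=
  card_le_card fun j hj => by
    simp only [mem_filter, mem_univ, true_and] at hj ⊢
    exact hj.trans (h j)

lemma conjP_le_card (l : Fin N → ℕ) (i : Fin m) : conjP m l i ≤ N :=
  (card_filter_le _ _).trans (card_fin N).le

lemma isPartition_conjP (l : Fin N → ℕ) : IsPartition (conjP m l) := fun i i' hii' =>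
  card_le_card fun j hj => by
    simp only [mem_filter, mem_univ, true_and] at hj ⊢
    exact le_trans (by simpa using hii') hj

lemma conjP_extendP (l : Fin N → ℕ) : conjP m (extendP l) = conjP m l := by
  funext i
  rw [conjP, conjP, card_filter, card_filter, Fin.sum_univ_castSucc]
  simp [extendP]

lemma HStrip.vStrip_conjP {l v : Fin N → ℕ} (h : HStrip l v) :
    VStrip (conjP m l) (conjP m v) := by
  refine fun i => ⟨conjP_le_conjP m h.1 i, ?_⟩
  rcases N with _ | N
  · simp [conjP]
  -- interlacing `l (j+1) ≤ v j` matches every part of `l` except the first with a part of `v`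
  have hshift : ∑ j : Fin N, (if (i : ℕ) + 1 ≤ l j.succ then 1 else 0)
      ≤ ∑ j : Fin N, (if (i : ℕ) + 1 ≤ v j.castSucc then 1 else 0) :=
    sum_le_sum fun j _ => by
      have : l j.succ ≤ v j.castSucc := h.2 j (by omega)
      split_ifs <;> omega
  simp only [conjP, card_filter] at hshift ⊢
  rw [Fin.sum_univ_succ, Fin.sum_univ_castSucc]
  split_ifs <;> omega

lemma preceq.conjP_le {l l' : Fin N → ℕ} (h : preceq l l') (i : Fin m) :
    conjP m l i ≤ conjP m l' i ∧ conjP m l' i ≤ conjP m l i + 2 := by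
  obtain ⟨v, -, -, -, hl'v, hvl⟩ := h
  have h₁ := hl'v.vStrip_conjP m i
  have h₂ := hvl.vStrip_conjP m i
  omega

end Conjugate

section Strips

variable {m : ℕ}

lemma IsPartition.complP {l : Fin m → ℕ} (hl : IsPartition l) (p : ℕ) :
    IsPartition (complP p l) := fun _ _ hij =>
  Nat.sub_le_sub_left (hl _ _ (Fin.rev_le_rev.mpr hij)) p

lemma IsPartition.inf {A B : Fin m → ℕ} (hA : IsPartition A) (hB : IsPartition B) :
    IsPartition (A ⊓ B) := fun i j hij =>
  inf_le_inf (hA i j hij) (hB i j hij)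

lemma vStrip_inf_left {A B : Fin m → ℕ} (h : ∀ j, A j ≤ B j + 1) : VStrip A (A ⊓ B) :=
  fun j => ⟨min_le_left _ _, by simp only [Pi.inf_apply]; have := h j; omega⟩

lemma vStrip_inf_right {A B : Fin m → ℕ} (h : ∀ j, B j ≤ A j + 1) : VStrip B (A ⊓ B) :=
  fun j => ⟨min_le_right _ _, by simp only [Pi.inf_apply]; have := h j; omega⟩

lemma skewWt_inf_left (A B : Fin m → ℕ) : skewWt A (A ⊓ B) = skewWt A B :=
  sum_congr rfl fun j _ => by simp only [Pi.inf_apply]; omega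

lemma skewWt_inf_right (A B : Fin m → ℕ) : skewWt B (A ⊓ B) = skewWt B A :=
  sum_congr rfl fun j _ => by simp only [Pi.inf_apply]; omega

lemma skewWt_add_skewWt_le {A B ρ : Fin m → ℕ} (hA : SubDiag ρ A) (hB : SubDiag ρ B) :
    skewWt A B + skewWt B A ≤ skewWt A ρ + skewWt B ρ := by
  simp only [skewWt, ← sum_add_distrib]
  exact sum_le_sum fun j _ => by have := hA j; have := hB j; omega

lemma skewWt_complP (p q : ℕ) (a b : Fin m → ℕ) :
    skewWt (complP p a) (complP q b) = ∑ j, ((p - a j) - (q - b j)) :=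
  Equiv.sum_comp Fin.revPerm fun j => (p - a j) - (q - b j)

lemma skewWt_complP_add_skewWt_complP {n : ℕ} {a b : Fin m → ℕ}
    (hab : ∀ j, a j ≤ b j ∧ b j ≤ a j + 2) (ha : ∀ j, a j ≤ n) (hb : ∀ j, b j ≤ n + 1) :
    skewWt (complP n a) (complP (n + 1) b) + skewWt (complP (n + 1) b) (complP n a)
      = m - (Finset.univ.filter (fun j : Fin m => b j = a j + 1)).card := by
  have hpart : ∀ j, ((n - a j) - (n + 1 - b j) + ((n + 1 - b j) - (n - a j)))
      + (if b j = a j + 1 then 1 else 0) = 1 := fun j => by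
    have := hab j; have := ha j; have := hb j
    split_ifs <;> omega
  have htotal := sum_congr rfl fun j (_ : j ∈ univ) => hpart j
  rw [sum_add_distrib, sum_const, card_univ, Fintype.card_fin, smul_eq_mul, mul_one] at htotal
  rw [skewWt_complP, skewWt_complP, ← sum_add_distrib, card_filter]
  omega

end Strips

theorem statement12_general (m n : ℕ) (lam : Fin (n + 1) → ℕ)
    (mu : Fin n → ℕ)
    (hpre : preceq (extendP mu) lam) :
    ∃ nu : Fin m → ℕ, IsPartition nu ∧
      SubDiag nu (complP n (conjP m mu)) ∧
      SubDiag nu (complP (n + 1) (conjP m lam)) ∧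
      VStrip (complP n (conjP m mu)) nu ∧
      VStrip (complP (n + 1) (conjP m lam)) nu ∧
      skewWt (complP n (conjP m mu)) nu + skewWt (complP (n + 1) (conjP m lam)) nu
        = m - (Finset.univ.filter
            (fun j : Fin m => conjP m lam j = conjP m mu j + 1)).card ∧
      ∀ ρ : Fin m → ℕ, IsPartition ρ →
        SubDiag ρ (complP n (conjP m mu)) →
        SubDiag ρ (complP (n + 1) (conjP m lam)) →
        VStrip (complP n (conjP m mu)) ρ →
        VStrip (complP (n + 1) (conjP m lam)) ρ →
          m - (Finset.univ.filter
              (fun j : Fin m => conjP m lam j = conjP m mu j + 1)).card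
            ≤ skewWt (complP n (conjP m mu)) ρ
              + skewWt (complP (n + 1) (conjP m lam)) ρ := by
  have hconj := hpre.conjP_le m
  rw [conjP_extendP] at hconj
  have hcost := skewWt_complP_add_skewWt_complP hconj (conjP_le_card m mu)
    (conjP_le_card m lam)
  set A := complP n (conjP m mu)
  set B := complP (n + 1) (conjP m lam)
  have hAB : ∀ j, A j ≤ B j + 1 ∧ B j ≤ A j + 1 := fun j => by
    have := hconj j.rev; have := conjP_le_card m mu j.rev; have := conjP_le_card m lam j.rev
    simp only [A, B, complP]
    omega
  refine ⟨A ⊓ B, ((isPartition_conjP m mu).complP n).inf ((isPartition_conjP m lam).complP _),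
    fun j => min_le_left _ _, fun j => min_le_right _ _, vStrip_inf_left fun j => (hAB j).1,
    vStrip_inf_right fun j => (hAB j).2, ?_, fun ρ _ hρA hρB _ _ => ?_⟩
  · rw [skewWt_inf_left, skewWt_inf_right, hcost]
  · exact hcost ▸ skewWt_add_skewWt_le hρA hρB

/-- For `λ ∈ Λ_{n+1}` with `λ ⊂ m^{n+1}` and `μ ∈ Λ_n` with `μ ⊂ m^n`
such that `μ ⪯ λ` (in `Λ_{n+1}`): the set of partitions `ν ∈ Λ_m` with
`ν ⊂ n^m − μ′`, `ν ⊂ (n+1)^m − λ′` such that `(n^m − μ′)/ν` and `((n+1)^m − λ′)/ν` are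
vertical strips is nonempty, and the minimum of `|(n^m − μ′)/ν| + |((n+1)^m − λ′)/ν|`
over such `ν` equals `m − d`, where `d = #{1 ≤ j ≤ m : λ′_j = μ′_j + 1}`. -/
theorem statement12 (m n : ℕ) (lam : Fin (n + 1) → ℕ) (hlam : IsPartition lam)
    (hlamb : SubDiag lam (rectP m (n + 1)))
    (mu : Fin n → ℕ) (hmu : IsPartition mu) (hmub : SubDiag mu (rectP m n))
    (hpre : preceq (extendP mu) lam) :
    ∃ nu : Fin m → ℕ, IsPartition nu ∧
      SubDiag nu (complP n (conjP m mu)) ∧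
      SubDiag nu (complP (n + 1) (conjP m lam)) ∧
      VStrip (complP n (conjP m mu)) nu ∧
      VStrip (complP (n + 1) (conjP m lam)) nu ∧
      skewWt (complP n (conjP m mu)) nu + skewWt (complP (n + 1) (conjP m lam)) nu
        = m - (Finset.univ.filter
            (fun j : Fin m => conjP m lam j = conjP m mu j + 1)).card ∧
      ∀ ρ : Fin m → ℕ, IsPartition ρ →
        SubDiag ρ (complP n (conjP m mu)) →
        SubDiag ρ (complP (n + 1) (conjP m lam)) →
        VStrip (complP n (conjP m mu)) ρ →
        VStrip (complP (n + 1) (conjP m lam)) ρ →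
          m - (Finset.univ.filter
              (fun j : Fin m => conjP m lam j = conjP m mu j + 1)).card
            ≤ skewWt (complP n (conjP m mu)) ρ
              + skewWt (complP (n + 1) (conjP m lam)) ρ :=
  statement12_general m n lam mu hpre
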